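/- arXiv:2407.04045 — 4 statements merged into one kernel-verified Lean document; each statement's English description precedes it below -/
import Mathlib

section
/- Let V ∈ C²(ℝ,ℝ) with bounded second derivative, let P, Q be momentum and position on L²(ℝ), and N = P² + Q². Then the commutator satisfies -i[V(Q),P²] = 2V'(Q)P - iV''(Q) on the Schwartz space, and ‖[V(Q),P²]ψ‖ ≤ ν‖Nψ‖ for all Schwartz ψ, where ν = 5‖V''‖_∞ + 4|V'(0)|. -/
/-!
The commutator formula is Leibniz' rule. For the bound, `|V'(x)| ≤ |V'(0)| + ‖V''‖_∞ |x|`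
reduces everything to `‖ψ‖, ‖ψ'‖ ≤ ‖Nψ‖` and `2 ‖xψ'‖² ≤ 3 ‖Nψ‖²`. These only use that
`D = d/dx` is skew-symmetric, `X = x` is symmetric and `[D, X] = 1`. Heisenberg's inequality
and Cauchy–Schwarz give `‖ψ‖² ≤ ‖Dψ‖² + ‖Xψ‖² = ⟪Nψ, ψ⟫ ≤ ‖Nψ‖ ‖ψ‖`, and the commutation
relation turns `‖Nψ‖²` into `‖X²ψ‖² + ‖D²ψ‖² - 2 ‖ψ‖² + 2 ‖XDψ‖²`.
-/

open MeasureTheory SchwartzMap ENNReal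
open scoped RealInnerProductSpace

section CanonicalPair

variable {S H : Type*} [AddCommGroup S] [Module ℝ S] [NormedAddCommGroup H]
  [InnerProductSpace ℝ H]

/-- The common domain `S` of `D` and `X` is embedded into the Hilbert space `H` by `j`; the model
is `D = d/dx` and `X = x` on Schwartz space inside `L²`. -/
structure IsCanonicalPair (j : S →ₗ[ℝ] H) (D X : Module.End ℝ S) : Prop where
  skew : ∀ u v, ⟪j (D u), j v⟫ = -⟪j u, j (D v)⟫
  symm : ∀ u v, ⟪j (X u), j v⟫ = ⟪j u, j (X v)⟫
  ccr : ∀ u, D (X u) = u + X (D u)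

namespace IsCanonicalPair

variable {j : S →ₗ[ℝ] H} {D X : Module.End ℝ S}

theorem norm_sq_eq_neg_two_inner (h : IsCanonicalPair j D X) (u : S) :
    ‖j u‖ ^ 2 = -2 * ⟪j (X u), j (D u)⟫ := by
  calc ‖j u‖ ^ 2 = ⟪j (D (X u) - X (D u)), j u⟫ := by
        rw [h.ccr, add_sub_cancel_right, real_inner_self_eq_norm_sq]
    _ = -2 * ⟪j (X u), j (D u)⟫ := by
        rw [map_sub, inner_sub_left, h.skew (X u), h.symm (D u), real_inner_comm (j (D u))]
        ring

theorem inner_oscillator_self (h : IsCanonicalPair j D X) (u : S) :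
    ⟪j ((X * X - D * D) u), j u⟫ = ‖j (D u)‖ ^ 2 + ‖j (X u)‖ ^ 2 := by
  rw [LinearMap.sub_apply, Module.End.mul_apply, Module.End.mul_apply, map_sub, inner_sub_left,
    h.symm, h.skew, real_inner_self_eq_norm_sq, real_inner_self_eq_norm_sq]
  ring

theorem norm_sq_le_norm_D_sq_add_norm_X_sq (h : IsCanonicalPair j D X) (u : S) :
    ‖j u‖ ^ 2 ≤ ‖j (D u)‖ ^ 2 + ‖j (X u)‖ ^ 2 := by
  rw [h.norm_sq_eq_neg_two_inner]
  nlinarith [abs_real_inner_le_norm (j (X u)) (j (D u)), neg_abs_le ⟪j (X u), j (D u)⟫,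
    sq_nonneg (‖j (X u)‖ - ‖j (D u)‖)]

theorem norm_D_sq_add_norm_X_sq_le (h : IsCanonicalPair j D X) (u : S) :
    ‖j (D u)‖ ^ 2 + ‖j (X u)‖ ^ 2 ≤ ‖j ((X * X - D * D) u)‖ * ‖j u‖ := by
  rw [← h.inner_oscillator_self]
  exact real_inner_le_norm _ _

theorem norm_le_norm_oscillator (h : IsCanonicalPair j D X) (u : S) :
    ‖j u‖ ≤ ‖j ((X * X - D * D) u)‖ := by
  have := (h.norm_sq_le_norm_D_sq_add_norm_X_sq u).trans (h.norm_D_sq_add_norm_X_sq_le u)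
  nlinarith [norm_nonneg (j u), norm_nonneg (j ((X * X - D * D) u))]

theorem norm_D_le_norm_oscillator (h : IsCanonicalPair j D X) (u : S) :
    ‖j (D u)‖ ≤ ‖j ((X * X - D * D) u)‖ := by
  have := h.norm_D_sq_add_norm_X_sq_le u
  have := h.norm_le_norm_oscillator u
  nlinarith [norm_nonneg (j u), norm_nonneg (j (D u)), norm_nonneg (j ((X * X - D * D) u)),
    sq_nonneg ‖j (X u)‖]

theorem norm_oscillator_sq (h : IsCanonicalPair j D X) (u : S) :
    ‖j ((X * X - D * D) u)‖ ^ 2 =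
      ‖j (X (X u))‖ ^ 2 + ‖j (D (D u))‖ ^ 2 - 2 * ‖j u‖ ^ 2 + 2 * ‖j (X (D u))‖ ^ 2 := by
  have hDXX : ⟪j (D (X (X u))), j (D u)⟫ = -‖j u‖ ^ 2 + ‖j (X (D u))‖ ^ 2 := by
    rw [h.ccr (X u), h.ccr u, map_add, map_add, map_add, inner_add_left, inner_add_left,
      h.symm (X (D u)), real_inner_self_eq_norm_sq]
    linarith [h.norm_sq_eq_neg_two_inner u]
  rw [LinearMap.sub_apply, Module.End.mul_apply, Module.End.mul_apply, map_sub, norm_sub_sq_real,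
    ← neg_neg ⟪j (X (X u)), j (D (D u))⟫, ← h.skew, hDXX]
  ring

theorem two_mul_norm_XD_sq_le (h : IsCanonicalPair j D X) (u : S) :
    2 * ‖j (X (D u))‖ ^ 2 ≤ 3 * ‖j ((X * X - D * D) u)‖ ^ 2 := by
  have := h.norm_oscillator_sq u
  have := h.norm_le_norm_oscillator u
  nlinarith [norm_nonneg (j u), sq_nonneg ‖j (X (X u))‖, sq_nonneg ‖j (D (D u))‖]

end IsCanonicalPair

end CanonicalPair

theorem eLpNorm_le_add_of_norm_le {α E F G : Type*} [MeasurableSpace α] {μ : Measure α}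
    [NormedAddCommGroup E] [NormedAddCommGroup F] [NormedAddCommGroup G] {p : ℝ≥0∞}
    {f : α → E} {g₁ : α → F} {g₂ : α → G} {c₁ c₂ : ℝ} (hp : 1 ≤ p)
    (hg₁ : AEStronglyMeasurable g₁ μ) (hg₂ : AEStronglyMeasurable g₂ μ) (hc₁ : 0 ≤ c₁)
    (hc₂ : 0 ≤ c₂) (h : ∀ᵐ x ∂μ, ‖f x‖ ≤ c₁ * ‖g₁ x‖ + c₂ * ‖g₂ x‖) :
    eLpNorm f p μ ≤ ENNReal.ofReal c₁ * eLpNorm g₁ p μ + ENNReal.ofReal c₂ * eLpNorm g₂ p μ := by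
  calc eLpNorm f p μ ≤ eLpNorm (fun x => c₁ * ‖g₁ x‖ + c₂ * ‖g₂ x‖) p μ := eLpNorm_mono_ae_real h
    _ ≤ eLpNorm (fun x => c₁ * ‖g₁ x‖) p μ + eLpNorm (fun x => c₂ * ‖g₂ x‖) p μ :=
        eLpNorm_add_le (hg₁.norm.const_mul c₁) (hg₂.norm.const_mul c₂) hp
    _ ≤ _ := by
        gcongr <;> refine eLpNorm_le_mul_eLpNorm_of_ae_le_mul (.of_forall fun x => ?_) p
        · rw [norm_mul, norm_norm, Real.norm_of_nonneg hc₁]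
        · rw [norm_mul, norm_norm, Real.norm_of_nonneg hc₂]

theorem norm_le_norm_zero_add_mul_abs {E : Type*} [NormedAddCommGroup E] [NormedSpace ℝ E]
    {f : ℝ → E} {C : ℝ} (hf : Differentiable ℝ f) (hC : ∀ x, ‖deriv f x‖ ≤ C) (x : ℝ) :
    ‖f x‖ ≤ ‖f 0‖ + C * |x| := by
  have := Convex.norm_image_sub_le_of_norm_deriv_le (fun y _ => hf y) (fun y _ => hC y)
    convex_univ (Set.mem_univ 0) (Set.mem_univ x)
  rw [sub_zero, Real.norm_eq_abs] at this
  linarith [norm_le_norm_add_norm_sub' (f x) (f 0)]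

theorem deriv_deriv_ofReal_mul {V : ℝ → ℝ} {f : ℝ → ℂ} (hV : Differentiable ℝ V)
    (hV' : Differentiable ℝ (deriv V)) (hf : Differentiable ℝ f)
    (hf' : Differentiable ℝ (deriv f)) (x : ℝ) :
    deriv (deriv fun y => (V y : ℂ) * f y) x =
      deriv (deriv V) x * f x + 2 * deriv V x * deriv f x + V x * deriv (deriv f) x := by
  have h₁ : deriv (fun y => (V y : ℂ) * f y) =
      fun y => ((deriv V y : ℝ) : ℂ) * f y + V y * deriv f y :=
    funext fun y => ((hV y).hasDerivAt.ofReal_comp.mul (hf y).hasDerivAt).deriv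
  rw [h₁]
  exact (((hV' x).hasDerivAt.ofReal_comp.mul (hf x).hasDerivAt).add
    ((hV x).hasDerivAt.ofReal_comp.mul (hf' x).hasDerivAt)).deriv.trans (by ring)

namespace SchwartzMap

variable {F : Type*} [NormedAddCommGroup F] [InnerProductSpace ℝ F]

noncomputable def position : 𝓢(ℝ, F) →L[ℝ] 𝓢(ℝ, F) := smulLeftCLM F fun x : ℝ => x

theorem coe_position (f : 𝓢(ℝ, F)) : ⇑(position f) = fun x => x • f x :=
  smulLeftCLM_apply (by fun_prop) f

@[simp]
theorem position_apply (f : 𝓢(ℝ, F)) (x : ℝ) : position f x = x • f x := by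
  rw [coe_position]

theorem coe_derivCLM (f : 𝓢(ℝ, F)) : ⇑(derivCLM ℝ F f) = deriv f :=
  funext (derivCLM_apply ℝ f)

theorem real_inner_toLp_two (f g : 𝓢(ℝ, F)) :
    ⟪f.toLp 2, g.toLp 2⟫ = ∫ x, ⟪f x, g x⟫ := by
  rw [L2.inner_def]
  refine integral_congr_ae ?_
  filter_upwards [f.coeFn_toLp 2, g.coeFn_toLp 2] with x hf hg
  rw [hf, hg]

theorem isCanonicalPair_deriv_position :
    IsCanonicalPair (toLpCLM ℝ F 2 volume).toLinearMap (derivCLM ℝ F).toLinearMap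
      position.toLinearMap where
  skew f g := by
    simp only [ContinuousLinearMap.coe_coe, toLpCLM_apply, real_inner_toLp_two, derivCLM_apply]
    have hibp : ∫ x, ⟪f x, deriv g x⟫ = -∫ x, ⟪deriv f x, g x⟫ :=
      integral_bilinear_deriv_right_eq_neg_left f g (innerSL ℝ)
    rw [hibp, neg_neg]
  symm f g := by
    simp only [ContinuousLinearMap.coe_coe, toLpCLM_apply, real_inner_toLp_two, position_apply,
      real_inner_smul_left, real_inner_smul_right]
  ccr f := by
    ext x
    simp only [ContinuousLinearMap.coe_coe, derivCLM_apply, coe_position, add_apply,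
      position_apply]
    exact ((hasDerivAt_id' x).smul (f.hasDerivAt x)).deriv.trans (by rw [one_smul, add_comm])

noncomputable def harmonicOscillator (ψ : 𝓢(ℝ, F)) : 𝓢(ℝ, F) :=
  position (position ψ) - derivCLM ℝ F (derivCLM ℝ F ψ)

theorem coe_harmonicOscillator (ψ : 𝓢(ℝ, ℂ)) :
    ⇑(harmonicOscillator ψ) = fun x => -deriv (deriv ψ) x + (x : ℂ) ^ 2 * ψ x := by
  ext x
  simp only [harmonicOscillator, sub_apply, position_apply, derivCLM_apply, Complex.real_smul,
    coe_derivCLM]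
  ring

theorem ofReal_norm_toLp (f : 𝓢(ℝ, F)) (p : ℝ≥0∞) :
    ENNReal.ofReal ‖f.toLp p‖ = eLpNorm f p volume := by
  rw [norm_toLp, ofReal_toReal (eLpNorm_lt_top f p volume).ne]

theorem eLpNorm_le_eLpNorm_harmonicOscillator (ψ : 𝓢(ℝ, F)) :
    eLpNorm ψ 2 volume ≤ eLpNorm (harmonicOscillator ψ) 2 volume := by
  rw [← ofReal_norm_toLp, ← ofReal_norm_toLp]
  exact ofReal_le_ofReal (isCanonicalPair_deriv_position.norm_le_norm_oscillator ψ)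

theorem eLpNorm_deriv_le_eLpNorm_harmonicOscillator (ψ : 𝓢(ℝ, F)) :
    eLpNorm (derivCLM ℝ F ψ) 2 volume ≤ eLpNorm (harmonicOscillator ψ) 2 volume := by
  rw [← ofReal_norm_toLp, ← ofReal_norm_toLp]
  exact ofReal_le_ofReal (isCanonicalPair_deriv_position.norm_D_le_norm_oscillator ψ)

theorem eLpNorm_position_deriv_le_two_mul_eLpNorm_harmonicOscillator (ψ : 𝓢(ℝ, F)) :
    eLpNorm (position (derivCLM ℝ F ψ)) 2 volume ≤
      2 * eLpNorm (harmonicOscillator ψ) 2 volume := by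
  have h : 2 * ‖(position (derivCLM ℝ F ψ)).toLp 2‖ ^ 2 ≤
      3 * ‖(harmonicOscillator ψ).toLp 2‖ ^ 2 :=
    isCanonicalPair_deriv_position.two_mul_norm_XD_sq_le ψ
  have h' : ‖(position (derivCLM ℝ F ψ)).toLp 2‖ ≤ 2 * ‖(harmonicOscillator ψ).toLp 2‖ := by
    nlinarith [norm_nonneg ((harmonicOscillator ψ).toLp 2)]
  rw [← ofReal_norm_toLp, ← ofReal_norm_toLp]
  refine (ofReal_le_ofReal h').trans_eq ?_
  rw [ofReal_mul zero_le_two, ofReal_ofNat]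

theorem eLpNorm_ofReal_mul_le {W : ℝ → ℝ} {C : ℝ} (hW : ∀ x, |W x| ≤ C) (ψ : 𝓢(ℝ, ℂ)) :
    eLpNorm (fun x => (W x : ℂ) * ψ x) 2 volume ≤
      ENNReal.ofReal C * eLpNorm (harmonicOscillator ψ) 2 volume := by
  calc _ ≤ ENNReal.ofReal C * eLpNorm ψ 2 volume :=
        eLpNorm_le_mul_eLpNorm_of_ae_le_mul (.of_forall fun x => by
          rw [norm_mul, Complex.norm_real, Real.norm_eq_abs]
          exact mul_le_mul_of_nonneg_right (hW x) (norm_nonneg _)) 2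
    _ ≤ _ := by gcongr; exact eLpNorm_le_eLpNorm_harmonicOscillator ψ

theorem eLpNorm_ofReal_mul_deriv_le {W : ℝ → ℝ} {a b : ℝ} (ha : 0 ≤ a) (hb : 0 ≤ b)
    (hW : ∀ x, |W x| ≤ a + b * |x|) (ψ : 𝓢(ℝ, ℂ)) :
    eLpNorm (fun x => (W x : ℂ) * deriv ψ x) 2 volume ≤
      ENNReal.ofReal (a + 2 * b) * eLpNorm (harmonicOscillator ψ) 2 volume := by
  have hW' (x : ℝ) : ‖(W x : ℂ) * deriv ψ x‖ ≤
      a * ‖derivCLM ℝ ℂ ψ x‖ + b * ‖position (derivCLM ℝ ℂ ψ) x‖ := by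
    rw [position_apply, derivCLM_apply, norm_smul, norm_mul, Complex.norm_real,
      Real.norm_eq_abs, Real.norm_eq_abs]
    nlinarith [hW x, norm_nonneg (deriv ψ x)]
  calc _ ≤ ENNReal.ofReal a * eLpNorm (derivCLM ℝ ℂ ψ) 2 volume +
        ENNReal.ofReal b * eLpNorm (position (derivCLM ℝ ℂ ψ)) 2 volume :=
        eLpNorm_le_add_of_norm_le one_le_two (derivCLM ℝ ℂ ψ).continuous.aestronglyMeasurable
          (position (derivCLM ℝ ℂ ψ)).continuous.aestronglyMeasurable ha hb (.of_forall hW')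
    _ ≤ ENNReal.ofReal a * eLpNorm (harmonicOscillator ψ) 2 volume +
        ENNReal.ofReal b * (2 * eLpNorm (harmonicOscillator ψ) 2 volume) := by
        gcongr
        exacts [eLpNorm_deriv_le_eLpNorm_harmonicOscillator ψ,
          eLpNorm_position_deriv_le_two_mul_eLpNorm_harmonicOscillator ψ]
    _ = _ := by
        rw [ofReal_add ha (by positivity), ofReal_mul zero_le_two, ofReal_ofNat]
        ring

end SchwartzMap

/-- for `V ∈ C²(ℝ,ℝ)` with `|V''| ≤ M` and a Schwartz function `ψ`, the
commutator `[V(Q), P²]ψ = (Vψ)'' - Vψ'' = V''ψ + 2V'ψ'` (equivalently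
`-i[V(Q),P²] = 2V'(Q)P - iV''(Q)`), and its `L²` norm is bounded by `ν ‖Nψ‖` with
`ν = 5‖V''‖_∞ + 4|V'(0)|` and `Nψ = -ψ'' + x²ψ` the harmonic oscillator. -/
theorem stmt8 (V : ℝ → ℝ) (hV : ContDiff ℝ 2 V) (M : ℝ)
    (hM : ∀ x : ℝ, |deriv (deriv V) x| ≤ M)
    (ψ : SchwartzMap ℝ ℂ) :
    (∀ x : ℝ,
      deriv (deriv (fun y : ℝ => (V y : ℂ) * ψ y)) x - (V x : ℂ) * deriv (deriv (⇑ψ)) x =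
        Complex.ofReal (deriv (deriv V) x) * ψ x +
          2 * Complex.ofReal (deriv V x) * deriv (⇑ψ) x) ∧
    eLpNorm
        (fun x : ℝ => Complex.ofReal (deriv (deriv V) x) * ψ x +
          2 * Complex.ofReal (deriv V x) * deriv (⇑ψ) x)
        2 volume ≤
      ENNReal.ofReal (5 * M + 4 * |deriv V 0|) *
        eLpNorm (fun x : ℝ => -(deriv (deriv (⇑ψ)) x) + (x : ℂ) ^ 2 * ψ x) 2 volume := by
  have hV₁ : Differentiable ℝ V := hV.differentiable two_ne_zero
  have hV₂ : Differentiable ℝ (deriv V) := hV.differentiable_deriv_two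
  have hψ' : Differentiable ℝ (deriv ψ) := by
    rw [← coe_derivCLM]
    exact (derivCLM ℝ ℂ ψ).differentiable
  have hM₀ : 0 ≤ M := (abs_nonneg _).trans (hM 0)
  refine ⟨fun x => by rw [deriv_deriv_ofReal_mul hV₁ hV₂ ψ.differentiable hψ' x]; ring, ?_⟩
  have h₂ := eLpNorm_ofReal_mul_deriv_le (W := fun x => 2 * deriv V x)
    (a := 2 * |deriv V 0|) (b := 2 * M) (by positivity) (by positivity) (fun x => by
      have : |deriv V x| ≤ |deriv V 0| + M * |x| := norm_le_norm_zero_add_mul_abs hV₂ hM x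
      rw [abs_mul, abs_two]
      linarith) ψ
  push_cast at h₂
  rw [← coe_harmonicOscillator]
  calc _ ≤ _ + _ := eLpNorm_add_le (by fun_prop) (by fun_prop) one_le_two
    _ ≤ _ := add_le_add (eLpNorm_ofReal_mul_le hM ψ) h₂
    _ = ENNReal.ofReal (M + (2 * |deriv V 0| + 2 * (2 * M))) *
          eLpNorm (harmonicOscillator ψ) 2 volume := by
        rw [← add_mul, ← ofReal_add hM₀ (by positivity)]
    _ ≤ _ := by gcongr ENNReal.ofReal ?_ * _; linarith [abs_nonneg (deriv V 0)]
end

section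
/- Shirokov's norm comparison: let G be a positive self-adjoint operator on a separable Hilbert space H and let A : D(G^{1/2}) → H be a G^{1/2}-bounded operator. Define ‖A‖_E = sup{‖Aψ‖ : ‖ψ‖ ≤ 1, ‖G^{1/2}ψ‖² ≤ E} for E > 0. Then for E' ≥ E > 0, ‖A‖_E ≤ ‖A‖_{E'} ≤ √(E'/E)·‖A‖_E. -/
/-! Scaling `ψ ↦ t • ψ` with `t = √(E/E')` maps the energy-`E'` part of the unit ball into the
energy-`E` part and multiplies `‖Aψ‖` by `t`, so `t ‖A‖_{E'} ≤ ‖A‖_E`. -/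

section EnergyNorm

variable {𝕜 V W W' : Type*} [RCLike 𝕜] [SeminormedAddCommGroup V] [NormedSpace 𝕜 V]
  [SeminormedAddCommGroup W] [NormedSpace 𝕜 W] [SeminormedAddCommGroup W'] [NormedSpace 𝕜 W']

def energyNormValues (R : V →ₗ[𝕜] W) (A : V →ₗ[𝕜] W') (E : ℝ) : Set ℝ :=
  {r | ∃ ψ : V, ‖ψ‖ ≤ 1 ∧ ‖R ψ‖ ^ 2 ≤ E ∧ r = ‖A ψ‖}

noncomputable def energyNorm (R : V →ₗ[𝕜] W) (A : V →ₗ[𝕜] W') (E : ℝ) : ℝ :=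
  sSup (energyNormValues R A E)

variable {R : V →ₗ[𝕜] W} {A : V →ₗ[𝕜] W'} {E E' : ℝ}

theorem zero_mem_energyNormValues (hE : 0 ≤ E) : (0 : ℝ) ∈ energyNormValues R A E :=
  ⟨0, by simp, by simpa using hE, by simp⟩

theorem energyNormValues_mono (h : E ≤ E') : energyNormValues R A E ⊆ energyNormValues R A E' :=
  fun _ ⟨ψ, hψ, hRψ, hr⟩ => ⟨ψ, hψ, hRψ.trans h, hr⟩

theorem bddAbove_energyNormValues (hbdd : ∃ C : ℝ, ∀ ψ : V, ‖A ψ‖ ≤ C * (‖R ψ‖ + ‖ψ‖))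
    (E : ℝ) : BddAbove (energyNormValues R A E) := by
  obtain ⟨C, hC⟩ := hbdd
  refine ⟨max C 0 * (√E + 1), ?_⟩
  rintro _ ⟨ψ, hψ, hRψ, rfl⟩
  have hRψ' : ‖R ψ‖ ≤ √E := Real.le_sqrt_of_sq_le hRψ
  calc ‖A ψ‖ ≤ C * (‖R ψ‖ + ‖ψ‖) := hC ψ
    _ ≤ max C 0 * (‖R ψ‖ + ‖ψ‖) := by gcongr; exact le_max_left C 0
    _ ≤ max C 0 * (√E + 1) := by gcongr

theorem mul_mem_energyNormValues {t r : ℝ} (ht₀ : 0 ≤ t) (ht₁ : t ≤ 1)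
    (hr : r ∈ energyNormValues R A E) : t * r ∈ energyNormValues R A (t ^ 2 * E) := by
  obtain ⟨ψ, hψ, hRψ, rfl⟩ := hr
  have hnorm : ‖(t : 𝕜)‖ = t := by rw [RCLike.norm_ofReal, abs_of_nonneg ht₀]
  refine ⟨(t : 𝕜) • ψ, ?_, ?_, ?_⟩
  · rw [norm_smul, hnorm]
    exact mul_le_one₀ ht₁ (norm_nonneg ψ) hψ
  · rw [map_smul, norm_smul, hnorm, mul_pow]
    gcongr
  · rw [map_smul, norm_smul, hnorm]

theorem energyNorm_mono (hbdd : ∃ C : ℝ, ∀ ψ : V, ‖A ψ‖ ≤ C * (‖R ψ‖ + ‖ψ‖)) (hE : 0 ≤ E)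
    (h : E ≤ E') : energyNorm R A E ≤ energyNorm R A E' :=
  csSup_le_csSup (bddAbove_energyNormValues hbdd E') ⟨0, zero_mem_energyNormValues hE⟩
    (energyNormValues_mono h)

theorem energyNorm_le_sqrt_div_mul (hbdd : ∃ C : ℝ, ∀ ψ : V, ‖A ψ‖ ≤ C * (‖R ψ‖ + ‖ψ‖))
    (hE : 0 < E) (h : E ≤ E') : energyNorm R A E' ≤ √(E' / E) * energyNorm R A E := by
  have hE' : 0 < E' := hE.trans_le h
  set t := √(E / E')
  have ht₀ : 0 < t := Real.sqrt_pos.2 (div_pos hE hE')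
  have ht₁ : t ≤ 1 := Real.sqrt_le_one.2 ((div_le_one hE').2 h)
  have hscale : t ^ 2 * E' = E := by
    rw [Real.sq_sqrt (div_pos hE hE').le, div_mul_cancel₀ E hE'.ne']
  have hinv : √(E' / E) * t = 1 := by
    rw [← Real.sqrt_mul (div_pos hE' hE).le, div_mul_div_comm, mul_comm E',
      div_self (by positivity), Real.sqrt_one]
  have hnonneg : 0 ≤ energyNorm R A E :=
    le_csSup (bddAbove_energyNormValues hbdd E) (zero_mem_energyNormValues hE.le)
  refine Real.sSup_le (fun r hr => ?_) (mul_nonneg (Real.sqrt_nonneg _) hnonneg)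
  have htr : t * r ≤ energyNorm R A E := by
    refine le_csSup (bddAbove_energyNormValues hbdd E) ?_
    simpa only [hscale] using mul_mem_energyNormValues ht₀.le ht₁ hr
  calc r = √(E' / E) * (t * r) := by rw [← mul_assoc, hinv, one_mul]
    _ ≤ √(E' / E) * energyNorm R A E := by gcongr

end EnergyNorm

theorem stmt9_general {H : Type*} [NormedAddCommGroup H] [InnerProductSpace ℂ H]
    (D : Submodule ℂ H) (R A : D →ₗ[ℂ] H)
    (hbdd : ∃ C : ℝ, ∀ ψ : D, ‖A ψ‖ ≤ C * (‖R ψ‖ + ‖(ψ : H)‖))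
    (E E' : ℝ) (hE : 0 < E) (hEE' : E ≤ E') :
    sSup {r | ∃ ψ : D, ‖(ψ : H)‖ ≤ 1 ∧ ‖R ψ‖ ^ 2 ≤ E ∧ r = ‖A ψ‖} ≤
        sSup {r | ∃ ψ : D, ‖(ψ : H)‖ ≤ 1 ∧ ‖R ψ‖ ^ 2 ≤ E' ∧ r = ‖A ψ‖} ∧
      sSup {r | ∃ ψ : D, ‖(ψ : H)‖ ≤ 1 ∧ ‖R ψ‖ ^ 2 ≤ E' ∧ r = ‖A ψ‖} ≤
        Real.sqrt (E' / E) *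
          sSup {r | ∃ ψ : D, ‖(ψ : H)‖ ≤ 1 ∧ ‖R ψ‖ ^ 2 ≤ E ∧ r = ‖A ψ‖} :=
  ⟨energyNorm_mono hbdd hE.le hEE', energyNorm_le_sqrt_div_mul hbdd hE hEE'⟩

/-- Shirokov's comparison of operator `E`-norms.  `G^{1/2}` is modelled by its
restriction `R : D →ₗ[ℂ] H` to its domain `D = D(G^{1/2})`, and `A : D →ₗ[ℂ] H` is a
`G^{1/2}`-bounded operator.  The operator `E`-norm is
`‖A‖_E = sup {‖Aψ‖ : ‖ψ‖ ≤ 1, ‖G^{1/2}ψ‖² ≤ E}`. -/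
theorem stmt9 {H : Type*} [NormedAddCommGroup H] [InnerProductSpace ℂ H] [CompleteSpace H]
    (D : Submodule ℂ H) (R A : D →ₗ[ℂ] H)
    (hbdd : ∃ C : ℝ, ∀ ψ : D, ‖A ψ‖ ≤ C * (‖R ψ‖ + ‖(ψ : H)‖))
    (E E' : ℝ) (hE : 0 < E) (hEE' : E ≤ E') :
    sSup {r | ∃ ψ : D, ‖(ψ : H)‖ ≤ 1 ∧ ‖R ψ‖ ^ 2 ≤ E ∧ r = ‖A ψ‖} ≤
        sSup {r | ∃ ψ : D, ‖(ψ : H)‖ ≤ 1 ∧ ‖R ψ‖ ^ 2 ≤ E' ∧ r = ‖A ψ‖} ∧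
      sSup {r | ∃ ψ : D, ‖(ψ : H)‖ ≤ 1 ∧ ‖R ψ‖ ^ 2 ≤ E' ∧ r = ‖A ψ‖} ≤
        Real.sqrt (E' / E) *
          sSup {r | ∃ ψ : D, ‖(ψ : H)‖ ≤ 1 ∧ ‖R ψ‖ ^ 2 ≤ E ∧ r = ‖A ψ‖} :=
  stmt9_general D R A hbdd E E' hE hEE'
end

section
/- Let T be a symmetric operator on a separable Hilbert space and S ⊇ T an extension such that iS is dissipative (Im⟨ψ, Sψ⟩ ≤ 0 for ψ ∈ D(S)). Then T ⊆ S ⊆ T* and T ⊆ S* ⊆ T*. -/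
open scoped InnerProductSpace ComplexConjugate

/-!
If `iS` is dissipative and `Im⟨ψ, Sψ⟩ = 0`, then along every line `ψ + sφ` the function
`Im⟨·, S·⟩` is a nonpositive real quadratic in `s` vanishing at `s = 0`, so its linear part
`Im(s (⟨ψ, Sφ⟩ - ⟨Sψ, φ⟩))` must vanish, i.e. `⟨Sψ, φ⟩ = ⟨ψ, Sφ⟩`. Symmetry of `T` gives
`Im⟨x, Tx⟩ = 0` on `D(T)`, so `S` is a formal adjoint of `T`, and all four inclusions follow
from maximality of the adjoint.
-/

theorem eq_zero_of_forall_mul_sq_add_mul_nonpos {b c : ℝ} (h : ∀ t : ℝ, c * t ^ 2 + b * t ≤ 0) :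
    b = 0 := by
  have hdiscrim : discrim (-c) (-b) 0 ≤ 0 :=
    discrim_le_zero fun t => by nlinarith [h t]
  rw [discrim] at hdiscrim
  nlinarith [sq_nonneg b]

namespace LinearPMap

variable {H : Type*} [NormedAddCommGroup H] [InnerProductSpace ℂ H]

theorem im_inner_add_smul_apply (S : H →ₗ.[ℂ] H) (ψ φ : S.domain) (s : ℂ) :
    (⟪((ψ + s • φ : S.domain) : H), S (ψ + s • φ)⟫_ℂ).im =
      (⟪(ψ : H), S ψ⟫_ℂ).im + (s * (⟪(ψ : H), S φ⟫_ℂ - ⟪S ψ, (φ : H)⟫_ℂ)).im +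
        Complex.normSq s * (⟪(φ : H), S φ⟫_ℂ).im := by
  rw [S.map_add, S.map_smul, Submodule.coe_add, Submodule.coe_smul, inner_add_left,
    inner_add_right, inner_add_right, inner_smul_left, inner_smul_right, inner_smul_left,
    inner_smul_right, ← inner_conj_symm (φ : H) (S ψ)]
  simp only [Complex.add_im, Complex.mul_im, Complex.mul_re, Complex.sub_re, Complex.sub_im,
    Complex.conj_re, Complex.conj_im, Complex.normSq_apply]
  ring

theorem inner_apply_eq_of_im_inner_self_eq_zero (S : H →ₗ.[ℂ] H)
    (hdiss : ∀ ψ : S.domain, (⟪(ψ : H), S ψ⟫_ℂ).im ≤ 0) {ψ : S.domain}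
    (hψ : (⟪(ψ : H), S ψ⟫_ℂ).im = 0) (φ : S.domain) :
    ⟪S ψ, (φ : H)⟫_ℂ = ⟪(ψ : H), S φ⟫_ℂ := by
  set w := ⟪(ψ : H), S φ⟫_ℂ - ⟪S ψ, (φ : H)⟫_ℂ
  have hquadratic : ∀ t : ℝ,
      (Complex.normSq w * (⟪(φ : H), S φ⟫_ℂ).im) * t ^ 2 + Complex.normSq w * t ≤ 0 := by
    intro t
    -- `s = t i w̄` turns the linear term `Im(s w)` into `t |w|²`.
    have h := hdiss (ψ + ((t * Complex.I * conj w) • φ))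
    rw [im_inner_add_smul_apply, hψ] at h
    have hlin : ((t : ℂ) * Complex.I * conj w * w).im = t * Complex.normSq w := by
      rw [mul_assoc, Complex.conj_mul', ← Complex.ofReal_pow, ← Complex.normSq_eq_norm_sq]
      simp
    have hnormSq : Complex.normSq ((t : ℂ) * Complex.I * conj w) = t ^ 2 * Complex.normSq w := by
      simp only [Complex.normSq_mul, Complex.normSq_conj, Complex.normSq_I, Complex.normSq_ofReal]
      ring
    rw [hlin, hnormSq] at h
    linarith
  have hw0 : w = 0 := Complex.normSq_eq_zero.mp (eq_zero_of_forall_mul_sq_add_mul_nonpos hquadratic)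
  exact (sub_eq_zero.mp hw0).symm

theorem adjoint_le_adjoint [CompleteSpace H] {T S : H →ₗ.[ℂ] H} (hT : Dense (T.domain : Set H))
    (hTS : T ≤ S) : S† ≤ T† := by
  have hS : Dense (S.domain : Set H) := hT.mono hTS.1
  refine IsFormalAdjoint.le_adjoint hT (IsFormalAdjoint.symm fun y x => ?_)
  rw [apply_comp_inclusion hTS]
  exact adjoint_isFormalAdjoint hS y (Submodule.inclusion hTS.1 x)

end LinearPMap

open LinearPMap in
/-- if `T` is a symmetric (densely defined) operator and `S ⊇ T` is an
extension such that `iS` is dissipative (`Im⟨ψ, Sψ⟩ ≤ 0`), then `T ⊆ S ⊆ T*` and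
`T ⊆ S* ⊆ T*`. -/
theorem stmt13 {H : Type*} [NormedAddCommGroup H] [InnerProductSpace ℂ H] [CompleteSpace H]
    (T S : H →ₗ.[ℂ] H) (hTdense : Dense (T.domain : Set H))
    (hsym : ∀ x y : T.domain, ⟪T x, (y : H)⟫_ℂ = ⟪(x : H), T y⟫_ℂ)
    (hTS : T ≤ S)
    (hdiss : ∀ ψ : S.domain, (⟪(ψ : H), S ψ⟫_ℂ).im ≤ 0) :
    T ≤ S ∧ S ≤ T.adjoint ∧ T ≤ S.adjoint ∧ S.adjoint ≤ T.adjoint := by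
  have hformal : T.IsFormalAdjoint S := by
    intro x φ
    have hreal : (⟪(x : H), T x⟫_ℂ).im = 0 :=
      Complex.conj_eq_iff_im.mp (by rw [inner_conj_symm, hsym])
    rw [apply_comp_inclusion hTS] at hreal ⊢
    exact S.inner_apply_eq_of_im_inner_self_eq_zero hdiss hreal φ
  exact ⟨hTS, hformal.le_adjoint hTdense, hformal.symm.le_adjoint (hTdense.mono hTS.1),
    adjoint_le_adjoint hTdense hTS⟩
end

section
/- Stability of Favard spaces under relatively bounded perturbation: let A₀ and A be generators of strongly continuous contraction semigroups on a Banach space X and let B = A - A₀ satisfy ‖Bx‖ ≤ a‖A₀x‖ + b‖x‖ for all x ∈ D(A₀), with a ≥ 0. Then for every α ∈ (0,1], F_α(A₀) ⊆ F_α(A), where F_α(A) = {x ∈ X : sup_{λ>0} ‖λ^α A(λ-A)^{-1}x‖ < ∞}. If moreover a < 1, then F_α(A₀) = F_α(A). -/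
/-- `R` is the bounded resolvent of the (possibly unbounded, partially defined) operator
`A` at `μ`, i.e. `R = (μ - A)⁻¹`. -/
def IsResolventAt {X : Type*} [NormedAddCommGroup X] [NormedSpace ℝ X]
    (A : X →ₗ.[ℝ] X) (μ : ℝ) (R : X →L[ℝ] X) : Prop :=
  (∀ y : X, ∃ h : R y ∈ A.domain, μ • R y - A ⟨R y, h⟩ = y) ∧
  ∀ x : A.domain, R (μ • (x : X) - A x) = x

/-- The Favard space `F_α(A) = {x : sup_{μ>0} ‖μ^α A(μ-A)⁻¹ x‖ < ∞}`, expressed through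
the resolvent family `R` of `A` via `A(μ-A)⁻¹ x = μ (μ-A)⁻¹ x - x`. -/
def Fav {X : Type*} [NormedAddCommGroup X] [NormedSpace ℝ X]
    (R : ℝ → X →L[ℝ] X) (α : ℝ) : Set X :=
  {x | ∃ M : ℝ, ∀ μ : ℝ, 0 < μ → μ ^ α * ‖μ • R μ x - x‖ ≤ M}

/-!
By the resolvent identity `R(μ, A) - R(μ, A₀) = R(μ, A) B R(μ, A₀)` and `‖μ R(μ, A)‖ ≤ 1`,
`‖μ R(μ, A) x - μ R(μ, A₀) x‖ ≤ ‖B R(μ, A₀) x‖ ≤ a ‖A₀ R(μ, A₀) x‖ + b ‖x‖ / μ`, and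
`A₀ R(μ, A₀) x = μ R(μ, A₀) x - x`. Hence `‖A R(μ, A) x‖ ≤ (1 + a) ‖A₀ R(μ, A₀) x‖ + b ‖x‖ / μ`,
and for `a < 1` the term `a ‖A₀ R(μ, A₀) x‖` can be absorbed to get the reverse comparison.
Multiplying by `μ ^ α` bounds the Favard seminorm over `μ > 1`, since `μ ^ α / μ ≤ 1` there;
for `μ ≤ 1` the quantity `μ ^ α ‖μ R(μ) x - x‖` is at most `2 ‖x‖` for any contraction resolvent.
-/

open Real

section Favard

variable {X : Type*} [NormedAddCommGroup X] [NormedSpace ℝ X]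

lemma norm_apply_le_div_of_opNorm_le {S : X →L[ℝ] X} {μ : ℝ} (hμ : 0 < μ) (hS : ‖S‖ ≤ 1 / μ)
    (y : X) : ‖S y‖ ≤ ‖y‖ / μ := by
  rw [le_div_iff₀ hμ, mul_comm]
  calc μ * ‖S y‖ ≤ μ * (1 / μ * ‖y‖) := by gcongr; exact S.le_of_opNorm_le hS y
    _ = ‖y‖ := by field_simp

lemma norm_smul_apply_le_of_opNorm_le {S : X →L[ℝ] X} {μ : ℝ} (hμ : 0 < μ) (hS : ‖S‖ ≤ 1 / μ)
    (y : X) : ‖μ • S y‖ ≤ ‖y‖ := by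
  rw [norm_smul, Real.norm_of_nonneg hμ.le, ← le_div_iff₀' hμ]
  exact norm_apply_le_div_of_opNorm_le hμ hS y

lemma rpow_mul_norm_smul_apply_sub_le {S : X →L[ℝ] X} {μ α : ℝ} (hμ : 0 < μ) (hμ1 : μ ≤ 1)
    (hα : 0 ≤ α) (hS : ‖S‖ ≤ 1 / μ) (x : X) : μ ^ α * ‖μ • S x - x‖ ≤ 2 * ‖x‖ := by
  calc μ ^ α * ‖μ • S x - x‖ ≤ 1 * (‖μ • S x‖ + ‖x‖) := by
        gcongr
        · exact rpow_le_one hμ.le hμ1 hα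
        · exact norm_sub_le _ _
    _ ≤ 2 * ‖x‖ := by linarith [norm_smul_apply_le_of_opNorm_le hμ hS x]

lemma mem_Fav_of_forall_one_lt {R : ℝ → X →L[ℝ] X} (hR : ∀ μ : ℝ, 0 < μ → ‖R μ‖ ≤ 1 / μ)
    {α : ℝ} (hα : 0 ≤ α) {x : X} {M : ℝ} (hM : ∀ μ : ℝ, 1 < μ → μ ^ α * ‖μ • R μ x - x‖ ≤ M) :
    x ∈ Fav R α := by
  refine ⟨max (2 * ‖x‖) M, fun μ hμ => ?_⟩
  rcases le_or_gt μ 1 with hμ1 | hμ1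
  · exact (rpow_mul_norm_smul_apply_sub_le hμ hμ1 hα (hR μ hμ) x).trans (le_max_left _ _)
  · exact (hM μ hμ1).trans (le_max_right _ _)

lemma rpow_mul_div_le {μ α c : ℝ} (hμ : 1 ≤ μ) (hα : α ≤ 1) (hc : 0 ≤ c) :
    μ ^ α * (c / μ) ≤ c := by
  have hμα : μ ^ α ≤ μ := by simpa using rpow_le_rpow_of_exponent_le hμ hα
  calc μ ^ α * (c / μ) ≤ μ * (c / μ) := by gcongr
    _ = c := by field_simp

lemma Fav_subset_Fav_of_norm_le {R₀ R : ℝ → X →L[ℝ] X} (hR : ∀ μ : ℝ, 0 < μ → ‖R μ‖ ≤ 1 / μ)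
    {α : ℝ} (hα : α ∈ Set.Ioc (0 : ℝ) 1) {c b : ℝ} (hc : 0 ≤ c) (hb : 0 ≤ b)
    (hcmp : ∀ μ : ℝ, 1 < μ → ∀ x : X,
      ‖μ • R μ x - x‖ ≤ c * ‖μ • R₀ μ x - x‖ + b * (‖x‖ / μ)) :
    Fav R₀ α ⊆ Fav R α := by
  rintro x ⟨M, hM⟩
  refine mem_Fav_of_forall_one_lt hR hα.1.le (M := c * M + b * ‖x‖) fun μ hμ => ?_
  have hμα : 0 ≤ μ ^ α := rpow_nonneg (by linarith) α
  calc μ ^ α * ‖μ • R μ x - x‖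
      ≤ c * (μ ^ α * ‖μ • R₀ μ x - x‖) + b * (μ ^ α * (‖x‖ / μ)) := by
        nlinarith [mul_le_mul_of_nonneg_left (hcmp μ hμ x) hμα]
    _ ≤ c * M + b * ‖x‖ := by
        gcongr
        · exact hM μ (by linarith)
        · exact rpow_mul_div_le hμ.le hα.2 (norm_nonneg x)

namespace IsResolventAt

variable {A₀ A : X →ₗ.[ℝ] X} {μ : ℝ} {R₀ R : X →L[ℝ] X}

lemma mem_domain (h : IsResolventAt A μ R) (y : X) : R y ∈ A.domain := (h.1 y).1

lemma apply_apply (h : IsResolventAt A μ R) (y : X) :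
    A ⟨R y, h.mem_domain y⟩ = μ • R y - y :=
  eq_sub_of_add_eq (sub_eq_iff_eq_add'.mp (h.1 y).2).symm

lemma sub_apply_eq (hle : A₀.domain ≤ A.domain) (h₀ : IsResolventAt A₀ μ R₀)
    (h : IsResolventAt A μ R) (x : X) :
    R x - R₀ x = R (A ⟨R₀ x, hle (h₀.mem_domain x)⟩ - A₀ ⟨R₀ x, h₀.mem_domain x⟩) := by
  calc R x - R₀ x = R x - R (μ • R₀ x - A ⟨R₀ x, hle (h₀.mem_domain x)⟩) := by
        rw [h.2 ⟨R₀ x, hle (h₀.mem_domain x)⟩]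
    _ = _ := by rw [← map_sub, h₀.apply_apply]; congr 1; abel

lemma norm_smul_apply_sub_smul_apply_le (hle : A₀.domain ≤ A.domain) {a b : ℝ} (hb : 0 ≤ b)
    (hrel : ∀ x : A₀.domain, ‖A ⟨(x : X), hle x.2⟩ - A₀ x‖ ≤ a * ‖A₀ x‖ + b * ‖(x : X)‖)
    (hμ : 0 < μ) (h₀ : IsResolventAt A₀ μ R₀) (hR₀ : ‖R₀‖ ≤ 1 / μ) (h : IsResolventAt A μ R)
    (hR : ‖R‖ ≤ 1 / μ) (x : X) :
    ‖μ • R x - μ • R₀ x‖ ≤ a * ‖μ • R₀ x - x‖ + b * (‖x‖ / μ) := by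
  rw [← smul_sub, h₀.sub_apply_eq hle h]
  calc _ ≤ ‖A ⟨R₀ x, hle (h₀.mem_domain x)⟩ - A₀ ⟨R₀ x, h₀.mem_domain x⟩‖ :=
        norm_smul_apply_le_of_opNorm_le hμ hR _
    _ ≤ a * ‖μ • R₀ x - x‖ + b * ‖R₀ x‖ := by
        simpa only [h₀.apply_apply] using hrel ⟨R₀ x, h₀.mem_domain x⟩
    _ ≤ a * ‖μ • R₀ x - x‖ + b * (‖x‖ / μ) := by
        gcongr; exact norm_apply_le_div_of_opNorm_le hμ hR₀ x

end IsResolventAt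

end Favard

theorem stmt15_general {X : Type*} [NormedAddCommGroup X] [NormedSpace ℝ X]
    (A₀ A : X →ₗ.[ℝ] X) (hle : A₀.domain ≤ A.domain)
    (a b : ℝ) (ha : 0 ≤ a) (hb : 0 ≤ b)
    (hrel : ∀ x : A₀.domain, ‖A ⟨(x : X), hle x.2⟩ - A₀ x‖ ≤ a * ‖A₀ x‖ + b * ‖(x : X)‖)
    (R₀ R : ℝ → X →L[ℝ] X)
    (hR₀ : ∀ μ : ℝ, 0 < μ → IsResolventAt A₀ μ (R₀ μ) ∧ ‖R₀ μ‖ ≤ 1 / μ)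
    (hR : ∀ μ : ℝ, 0 < μ → IsResolventAt A μ (R μ) ∧ ‖R μ‖ ≤ 1 / μ)
    (α : ℝ) (hα : α ∈ Set.Ioc (0 : ℝ) 1) :
    Fav R₀ α ⊆ Fav R α ∧ (a < 1 → Fav R₀ α = Fav R α) := by
  have hpert : ∀ μ : ℝ, 1 < μ → ∀ x : X,
      ‖μ • R μ x - μ • R₀ μ x‖ ≤ a * ‖μ • R₀ μ x - x‖ + b * (‖x‖ / μ) := fun μ hμ =>
    have hμ : 0 < μ := by linarith
    (hR₀ μ hμ).1.norm_smul_apply_sub_smul_apply_le hle hb hrel hμ (hR₀ μ hμ).2 (hR μ hμ).1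
      (hR μ hμ).2
  have hsub : Fav R₀ α ⊆ Fav R α :=
    Fav_subset_Fav_of_norm_le (c := 1 + a) (fun μ hμ => (hR μ hμ).2) hα (by linarith) hb
      fun μ hμ x => by
        linarith [hpert μ hμ x, norm_sub_le_norm_sub_add_norm_sub (μ • R μ x) (μ • R₀ μ x) x]
  refine ⟨hsub, fun ha1 => hsub.antisymm ?_⟩
  have h1a : 0 < 1 - a := by linarith
  refine Fav_subset_Fav_of_norm_le (fun μ hμ => (hR₀ μ hμ).2) hα (inv_nonneg.2 h1a.le)
    (mul_nonneg (inv_nonneg.2 h1a.le) hb) fun μ hμ x => ?_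
  rw [mul_assoc, ← mul_add, ← div_eq_inv_mul, le_div_iff₀ h1a]
  nlinarith [hpert μ hμ x, norm_sub_le_norm_sub_add_norm_sub (μ • R₀ μ x) (μ • R μ x) x,
    norm_sub_rev (μ • R₀ μ x) (μ • R μ x)]

/-- stability of Favard spaces under relatively bounded perturbations.
`A₀` and `A` generate contraction semigroups (so their resolvents satisfy the
Hille–Yosida bound `‖(μ - ·)⁻¹‖ ≤ 1/μ` for `μ > 0`), and `B = A - A₀` is relatively
`A₀`-bounded with bound `a`.  Then `F_α(A₀) ⊆ F_α(A)` for `α ∈ (0,1]`, with equality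
when `a < 1`. -/
theorem stmt15 {X : Type*} [NormedAddCommGroup X] [NormedSpace ℝ X] [CompleteSpace X]
    (A₀ A : X →ₗ.[ℝ] X) (hle : A₀.domain ≤ A.domain)
    (a b : ℝ) (ha : 0 ≤ a) (hb : 0 ≤ b)
    (hrel : ∀ x : A₀.domain, ‖A ⟨(x : X), hle x.2⟩ - A₀ x‖ ≤ a * ‖A₀ x‖ + b * ‖(x : X)‖)
    (R₀ R : ℝ → X →L[ℝ] X)
    (hR₀ : ∀ μ : ℝ, 0 < μ → IsResolventAt A₀ μ (R₀ μ) ∧ ‖R₀ μ‖ ≤ 1 / μ)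
    (hR : ∀ μ : ℝ, 0 < μ → IsResolventAt A μ (R μ) ∧ ‖R μ‖ ≤ 1 / μ)
    (α : ℝ) (hα : α ∈ Set.Ioc (0 : ℝ) 1) :
    Fav R₀ α ⊆ Fav R α ∧ (a < 1 → Fav R₀ α = Fav R α) :=
  stmt15_general A₀ A hle a b ha hb hrel R₀ R hR₀ hR α hα
end
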